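/- arXiv:2408.11422 — 4 statements merged into one kernel-verified Lean document; each statement's English description precedes it below -/
import Mathlib

section
/- Let L^1, ..., L^k be functions from {1,...,n} to positive integers, and let L be defined by the recursive procedure A (which on interval [i,j] at level ℓ picks the key m realizing the minimum v of min_s L^s_r over r in [i,j] according to the median rule, sets L_m = ℓ, and recurses on [i,m−1] and [m+1,j] at level ℓ+1). If each L^s is a BST level vector, then for every key a, L_a ≤ ⌈log₂(k+1)⌉ · min_s L^s_a. -/
open scoped Classical

/-- `L` is a level vector of a BST on keys `{1,...,n}` (keys represented as naturals). -/
def IsBSTLevelVectorOn (n : ℕ) (L : ℕ → ℕ) : Prop :=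
  (∀ i, 1 ≤ i → i ≤ n → 1 ≤ L i ∧ L i ≤ n) ∧
  ∀ i j, 1 ≤ i → j ≤ n → i < j → L i = L j →
    ∃ r, i < r ∧ r < j ∧ L r < L i

/-- The minimum level `v` of the procedure `A`: the minimum of `L^s_r` over `r ∈ [i,j]`
and scenarios `s`. -/
noncomputable def minLevel {k : ℕ} (Ls : Fin k → ℕ → ℕ) (i j : ℕ) : ℕ :=
  sInf {x | ∃ r, i ≤ r ∧ r ≤ j ∧ ∃ s : Fin k, Ls s r = x}

/-- The ordered set `S` of keys `r ∈ [i,j]` attaining the minimum level in some scenario. -/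
noncomputable def minSet {k : ℕ} (Ls : Fin k → ℕ → ℕ) (i j : ℕ) : Finset ℕ :=
  (Finset.Icc i j).filter (fun r => ∃ s : Fin k, Ls s r = minLevel Ls i j)

/-- The median rule: the middle element `m` of the ordered set `S` (an element `m ∈ S`
with both `|S ∩ [i,m-1]|` and `|S ∩ [m+1,j]|` at most `⌈(|S|-1)/2⌉`). -/
noncomputable def medianKey {k : ℕ} (Ls : Fin k → ℕ → ℕ) (i j : ℕ) : ℕ :=
  max i (min j (((minSet Ls i j).sort (· ≤ ·)).getD (((minSet Ls i j).card - 1) / 2) i))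

/-- The recursive procedure `A` of algorithm R-bst: on the interval `[i,j]` at level `ℓ`
it assigns level `ℓ` to the median key `m` of the set of minimum-level keys and recurses
on `[i,m-1]` and `[m+1,j]` at level `ℓ+1`.  Keys outside `[i,j]` get the dummy value `0`. -/
noncomputable def procA {k : ℕ} (Ls : Fin k → ℕ → ℕ) (i j ℓ : ℕ) : ℕ → ℕ :=
  if hij : j < i then fun _ => 0
  else
    fun a =>
      if a = medianKey Ls i j then ℓ
      else if a < medianKey Ls i j then procA Ls i (medianKey Ls i j - 1) (ℓ + 1) a
      else procA Ls (medianKey Ls i j + 1) j (ℓ + 1) a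
termination_by j + 1 - i
decreasing_by
  · have h1 : i ≤ medianKey Ls i j := le_max_left _ _
    have h2 : medianKey Ls i j ≤ j := max_le (not_lt.mp hij) (min_le_left _ _)
    omega
  · have h1 : i ≤ medianKey Ls i j := le_max_left _ _
    have h2 : medianKey Ls i j ≤ j := max_le (not_lt.mp hij) (min_le_left _ _)
    omega

/-! ### Auxiliary lemmas -/

lemma sort_getD_spec (S : Finset ℕ) (p : ℕ) (hp : p < S.card) (d : ℕ) :
    (S.sort (· ≤ ·)).getD p d ∈ S ∧
    (S.filter (· < (S.sort (· ≤ ·)).getD p d)).card = p := by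
  set l := S.sort (· ≤ ·) with hl
  have hlen : l.length = S.card := Finset.length_sort _
  have hp' : p < l.length := by omega
  have hm : l.getD p d = l[p] := List.getD_eq_getElem l d hp'
  have hsor : l.SortedLT := Finset.sortedLT_sort S
  have hmono := hsor.strictMono_get
  constructor
  · rw [hm]
    exact (Finset.mem_sort _).mp (List.getElem_mem hp')
  · rw [hm]
    have hfilt : (S.filter (· < l[p])).card = (l.filter (fun x => decide (x < l[p]))).length := by
      have h1 : (S.filter (· < l[p])).val = Multiset.filter (· < l[p]) S.val := Finset.filter_val _ _
      rw [Finset.card_def, h1, ← Finset.sort_eq S (· ≤ ·), ← hl]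
      simp [Multiset.filter_coe]
    rw [hfilt]
    have hsplit : l = l.take p ++ l.drop p := (List.take_append_drop p l).symm
    have htake : (l.take p).filter (fun x => decide (x < l[p])) = l.take p := by
      apply List.filter_eq_self.mpr
      intro x hx
      obtain ⟨q, hq, hxq⟩ := List.mem_iff_getElem.mp hx
      have hqp : q < p := by simp [List.length_take] at hq; omega
      have hq2 : q < l.length := by omega
      have heq : (l.take p)[q] = l[q] := by simp [List.getElem_take]
      rw [heq] at hxq
      rw [← hxq]
      simpa using hmono (show (⟨q, hq2⟩ : Fin l.length) < ⟨p, hp'⟩ from hqp)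
    have hdrop : (l.drop p).filter (fun x => decide (x < l[p])) = [] := by
      apply List.filter_eq_nil_iff.mpr
      intro x hx
      obtain ⟨q, hq, hxq⟩ := List.mem_iff_getElem.mp hx
      have hq' : p + q < l.length := by simp [List.length_drop] at hq; omega
      have heq : (l.drop p)[q] = l[p + q]'hq' := by simp [List.getElem_drop]
      rw [heq] at hxq
      rw [← hxq]
      simp only [decide_eq_true_eq, not_lt]
      have := hmono.monotone (show (⟨p, hp'⟩ : Fin l.length) ≤ ⟨p + q, hq'⟩ from by simp)
      simpa using this
    have hlen2 := congrArg (fun t => (List.filter (fun x => decide (x < l[p])) t).length) hsplit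
    rw [hlen2, List.filter_append, htake, hdrop]
    simp [List.length_take]
    omega

section Aux

variable {n k : ℕ} (Ls : Fin k → ℕ → ℕ)

lemma minLevel_mem (hk : 0 < k) {i j : ℕ} (hij : i ≤ j) :
    ∃ r, i ≤ r ∧ r ≤ j ∧ ∃ s : Fin k, Ls s r = minLevel Ls i j := by
  have hne : {x | ∃ r, i ≤ r ∧ r ≤ j ∧ ∃ s : Fin k, Ls s r = x}.Nonempty :=
    ⟨Ls ⟨0, hk⟩ i, i, le_refl i, hij, ⟨0, hk⟩, rfl⟩
  exact Nat.sInf_mem hne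

lemma minLevel_le {i j r : ℕ} (hir : i ≤ r) (hrj : r ≤ j) (s : Fin k) :
    minLevel Ls i j ≤ Ls s r :=
  Nat.sInf_le ⟨r, hir, hrj, s, rfl⟩

lemma minLevel_pos (hk : 0 < k) (hLs : ∀ s, IsBSTLevelVectorOn n (Ls s))
    {i j : ℕ} (hi : 1 ≤ i) (hj : j ≤ n) (hij : i ≤ j) : 1 ≤ minLevel Ls i j := by
  obtain ⟨r, hir, hrj, s, hs⟩ := minLevel_mem Ls hk hij
  have := ((hLs s).1 r (le_trans hi hir) (le_trans hrj hj)).1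
  omega

lemma minLevel_mono {i j i' j' : ℕ} (hi : i ≤ i') (hj : j' ≤ j) (hij : i' ≤ j') (hk : 0 < k) :
    minLevel Ls i j ≤ minLevel Ls i' j' := by
  obtain ⟨r, hir, hrj, s, hs⟩ := minLevel_mem Ls hk hij
  rw [← hs]
  exact minLevel_le Ls (le_trans hi hir) (le_trans hrj hj) s

lemma minSet_nonempty (hk : 0 < k) {i j : ℕ} (hij : i ≤ j) : (minSet Ls i j).Nonempty := by
  obtain ⟨r, hir, hrj, s, hs⟩ := minLevel_mem Ls hk hij
  exact ⟨r, Finset.mem_filter.mpr ⟨Finset.mem_Icc.mpr ⟨hir, hrj⟩, s, hs⟩⟩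

lemma minSet_card_le (hk : 0 < k) (hLs : ∀ s, IsBSTLevelVectorOn n (Ls s))
    {i j : ℕ} (hi : 1 ≤ i) (hj : j ≤ n) : (minSet Ls i j).card ≤ k := by
  classical
  set v := minLevel Ls i j
  set f : ℕ → Fin k := fun r => if h : ∃ s : Fin k, Ls s r = v then h.choose else ⟨0, hk⟩ with hf
  have hfs : ∀ r ∈ minSet Ls i j, Ls (f r) r = v := by
    intro r hr
    obtain ⟨-, h⟩ := Finset.mem_filter.mp hr
    change ∃ s : Fin k, Ls s r = v at h
    simp only [hf, dif_pos h]
    exact h.choose_spec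
  have key : ∀ r1 r2, r1 ∈ minSet Ls i j → r2 ∈ minSet Ls i j → f r1 = f r2 →
      r1 < r2 → False := by
    intro r1 r2 h1 h2 heq hlt
    set s := f r1 with hs
    have e1 : Ls s r1 = v := hfs r1 h1
    have e2 : Ls s r2 = v := heq ▸ hfs r2 h2
    obtain ⟨hr1, -⟩ := Finset.mem_filter.mp h1
    obtain ⟨hr2, -⟩ := Finset.mem_filter.mp h2
    rw [Finset.mem_Icc] at hr1 hr2
    obtain ⟨r, hrl, hrr, hlt'⟩ := (hLs s).2 r1 r2 (le_trans hi hr1.1) (le_trans hr2.2 hj) hlt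
      (by rw [e1, e2])
    have : v ≤ Ls s r := minLevel_le Ls (by omega) (by omega) s
    omega
  have hinj : Set.InjOn f (minSet Ls i j) := by
    intro r1 h1 r2 h2 heq
    rcases lt_trichotomy r1 r2 with h | h | h
    · exact (key r1 r2 h1 h2 heq h).elim
    · exact h
    · exact (key r2 r1 h2 h1 heq.symm h).elim
  calc (minSet Ls i j).card = ((minSet Ls i j).image f).card :=
        (Finset.card_image_of_injOn hinj).symm
    _ ≤ Fintype.card (Fin k) := Finset.card_le_univ _
    _ = k := Fintype.card_fin k

lemma medianKey_spec (hk : 0 < k) {i j : ℕ} (hij : i ≤ j) :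
    medianKey Ls i j ∈ minSet Ls i j ∧
    ((minSet Ls i j).filter (· < medianKey Ls i j)).card = ((minSet Ls i j).card - 1) / 2 ∧
    ((minSet Ls i j).filter (medianKey Ls i j < ·)).card
      = (minSet Ls i j).card - 1 - ((minSet Ls i j).card - 1) / 2 := by
  set S := minSet Ls i j with hS
  have hcard : 1 ≤ S.card := Finset.card_pos.mpr (minSet_nonempty Ls hk hij)
  have hp : (S.card - 1) / 2 < S.card := by omega
  obtain ⟨hmem, hcnt⟩ := sort_getD_spec S ((S.card - 1) / 2) hp i
  set m0 := (S.sort (· ≤ ·)).getD ((S.card - 1) / 2) i with hm0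
  have hIcc : m0 ∈ Finset.Icc i j := (Finset.mem_filter.mp hmem).1
  rw [Finset.mem_Icc] at hIcc
  have hmk : medianKey Ls i j = m0 := by
    rw [medianKey, ← hS, ← hm0, min_eq_right hIcc.2, max_eq_right hIcc.1]
  rw [hmk]
  refine ⟨hmem, hcnt, ?_⟩
  have htot : (S.filter (· < m0)).card + (S.filter (fun x => ¬ x < m0)).card = S.card :=
    Finset.card_filter_add_card_filter_not _
  have hgt : S.filter (m0 < ·) = (S.filter (fun x => ¬ x < m0)).erase m0 := by
    ext x
    simp only [Finset.mem_erase, Finset.mem_filter, not_lt]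
    constructor
    · rintro ⟨hx, hlt⟩; exact ⟨by omega, hx, by omega⟩
    · rintro ⟨hne, hx, hle⟩; exact ⟨hx, by omega⟩
  have hm0mem : m0 ∈ S.filter (fun x => ¬ x < m0) :=
    Finset.mem_filter.mpr ⟨hmem, by omega⟩
  rw [hgt, Finset.card_erase_of_mem hm0mem]
  omega

lemma clog_halve {c c' : ℕ} (hc : 1 ≤ c) (h : c' ≤ c / 2) :
    Nat.clog 2 (c' + 1) + 1 ≤ Nat.clog 2 (c + 1) := by
  have h2 : Nat.clog 2 (c + 1) = Nat.clog 2 ((c + 1 + 2 - 1) / 2) + 1 :=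
    Nat.clog_of_two_le one_lt_two (by omega)
  have h3 : c' + 1 ≤ (c + 1 + 2 - 1) / 2 := by omega
  rw [h2]
  exact Nat.add_le_add_right (Nat.clog_mono_right 2 h3) 1

lemma procA_main (hk : 0 < k) (hLs : ∀ s, IsBSTLevelVectorOn n (Ls s)) :
    ∀ N i j ℓ a, j + 1 - i ≤ N → 1 ≤ i → j ≤ n → i ≤ a → a ≤ j →
      ℓ + Nat.clog 2 ((minSet Ls i j).card + 1) ≤ Nat.clog 2 (k + 1) * minLevel Ls i j + 1 →
      procA Ls i j ℓ a ≤ Nat.clog 2 (k + 1) * ⨅ s : Fin k, Ls s a := by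
  have hC1 : 1 ≤ Nat.clog 2 (k + 1) := Nat.clog_pos one_lt_two (by omega)
  intro N
  induction N with
  | zero => intro i j ℓ a hN hi hj hia haj hinv; omega
  | succ N IH =>
    intro i j ℓ a hN hi hj hia haj hinv
    have hij : i ≤ j := le_trans hia haj
    set m := medianKey Ls i j with hm
    obtain ⟨hmem, hcntlt, hcntgt⟩ := medianKey_spec Ls hk hij
    rw [← hm] at hmem hcntlt hcntgt
    have hmIcc : i ≤ m ∧ m ≤ j := Finset.mem_Icc.mp (Finset.mem_filter.mp hmem).1
    set v := minLevel Ls i j with hv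
    set c := (minSet Ls i j).card with hc
    have hcpos : 1 ≤ c := Finset.card_pos.mpr (minSet_nonempty Ls hk hij)
    have hck : c ≤ k := minSet_card_le Ls hk hLs hi hj
    have hclogc : 1 ≤ Nat.clog 2 (c + 1) := Nat.clog_pos one_lt_two (by omega)
    rw [procA, dif_neg (by omega : ¬ j < i)]
    by_cases ha : a = m
    · rw [if_pos (hm ▸ ha)]
      have hiInf : (⨅ s : Fin k, Ls s a) = v := by
        obtain ⟨-, s, hs⟩ := Finset.mem_filter.mp hmem
        apply le_antisymm
        · calc (⨅ s : Fin k, Ls s a) ≤ Ls s a := ciInf_le (OrderBot.bddBelow _) s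
            _ = v := by rw [ha]; exact hs
        · have : Nonempty (Fin k) := ⟨⟨0, hk⟩⟩
          exact le_ciInf fun s' => by rw [ha]; exact minLevel_le Ls hmIcc.1 hmIcc.2 s'
      rw [hiInf]
      set x := Nat.clog 2 (k + 1) * v with hx
      omega
    · rw [if_neg (hm ▸ ha)]
      by_cases ha2 : a < m
      · rw [if_pos (hm ▸ ha2), ← hm]
        -- left child [i, m-1]
        have hij' : i ≤ m - 1 := by omega
        have hchild : i ≤ a ∧ a ≤ m - 1 := ⟨hia, by omega⟩
        set v' := minLevel Ls i (m - 1) with hv'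
        set c' := (minSet Ls i (m - 1)).card with hc'
        have hvv' : v ≤ v' := minLevel_mono Ls (le_refl i) (by omega) hij' hk
        have hck' : c' ≤ k := minSet_card_le Ls hk hLs hi (by omega)
        apply IH i (m - 1) (ℓ + 1) a (by omega) hi (by omega) hia (by omega)
        rw [← hv', ← hc']
        by_cases hveq : v' = v
        · -- halving case
          have hsub : minSet Ls i (m - 1) ⊆ (minSet Ls i j).filter (· < m) := by
            intro r hr
            obtain ⟨hrI, s, hs⟩ := Finset.mem_filter.mp hr
            rw [Finset.mem_Icc] at hrI
            refine Finset.mem_filter.mpr ⟨Finset.mem_filter.mpr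
              ⟨Finset.mem_Icc.mpr ⟨hrI.1, by omega⟩, s, ?_⟩, by omega⟩
            rw [hs, ← hv', hveq]
          have hcc : c' ≤ c / 2 := by
            have := Finset.card_le_card hsub
            rw [hcntlt] at this
            omega
          have hstep := clog_halve hcpos hcc
          set x := Nat.clog 2 (k + 1) * v with hx
          rw [hveq]
          omega
        · -- level increase case
          have hvlt : v + 1 ≤ v' := by omega
          have hclogc' : Nat.clog 2 (c' + 1) ≤ Nat.clog 2 (k + 1) :=
            Nat.clog_mono_right 2 (by omega)
          have hmul : Nat.clog 2 (k + 1) * v + Nat.clog 2 (k + 1)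
              ≤ Nat.clog 2 (k + 1) * v' := by
            calc Nat.clog 2 (k + 1) * v + Nat.clog 2 (k + 1)
                = Nat.clog 2 (k + 1) * (v + 1) := by ring
              _ ≤ Nat.clog 2 (k + 1) * v' := Nat.mul_le_mul_left _ hvlt
          set x := Nat.clog 2 (k + 1) * v with hx
          set y := Nat.clog 2 (k + 1) * v' with hy
          set C := Nat.clog 2 (k + 1) with hC
          omega
      · rw [if_neg (hm ▸ ha2), ← hm]
        -- right child [m+1, j]
        have ham : m < a := by omega
        set v' := minLevel Ls (m + 1) j with hv'
        set c' := (minSet Ls (m + 1) j).card with hc'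
        have hvv' : v ≤ v' := minLevel_mono Ls (by omega) (le_refl j) (by omega) hk
        have hck' : c' ≤ k := minSet_card_le Ls hk hLs (by omega) hj
        apply IH (m + 1) j (ℓ + 1) a (by omega) (by omega) hj (by omega) haj
        rw [← hv', ← hc']
        by_cases hveq : v' = v
        · have hsub : minSet Ls (m + 1) j ⊆ (minSet Ls i j).filter (m < ·) := by
            intro r hr
            obtain ⟨hrI, s, hs⟩ := Finset.mem_filter.mp hr
            rw [Finset.mem_Icc] at hrI
            refine Finset.mem_filter.mpr ⟨Finset.mem_filter.mpr
              ⟨Finset.mem_Icc.mpr ⟨by omega, hrI.2⟩, s, ?_⟩, by omega⟩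
            rw [hs, ← hv', hveq]
          have hcc : c' ≤ c / 2 := by
            have := Finset.card_le_card hsub
            rw [hcntgt] at this
            omega
          have hstep := clog_halve hcpos hcc
          set x := Nat.clog 2 (k + 1) * v with hx
          rw [hveq]
          omega
        · have hvlt : v + 1 ≤ v' := by omega
          have hclogc' : Nat.clog 2 (c' + 1) ≤ Nat.clog 2 (k + 1) :=
            Nat.clog_mono_right 2 (by omega)
          have hmul : Nat.clog 2 (k + 1) * v + Nat.clog 2 (k + 1)
              ≤ Nat.clog 2 (k + 1) * v' := by
            calc Nat.clog 2 (k + 1) * v + Nat.clog 2 (k + 1)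
                = Nat.clog 2 (k + 1) * (v + 1) := by ring
              _ ≤ Nat.clog 2 (k + 1) * v' := Nat.mul_le_mul_left _ hvlt
          set x := Nat.clog 2 (k + 1) * v with hx
          set y := Nat.clog 2 (k + 1) * v' with hy
          set C := Nat.clog 2 (k + 1) with hC
          omega

end Aux

/-- Theorem 2 (analysis of R-bst): if `L` is produced by procedure `A` on `[1,n]` at
level `1` from BST level vectors `L^1,…,L^k`, then for every key `a`,
`L_a ≤ ⌈log₂(k+1)⌉ · min_s L^s_a`. -/
theorem procA_level_bound {n k : ℕ} (hk : 0 < k) (Ls : Fin k → ℕ → ℕ)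
    (hLs : ∀ s, IsBSTLevelVectorOn n (Ls s)) (a : ℕ) (ha1 : 1 ≤ a) (han : a ≤ n) :
    procA Ls 1 n 1 a ≤ Nat.clog 2 (k + 1) * ⨅ s : Fin k, Ls s a := by
  have h1n : 1 ≤ n := le_trans ha1 han
  apply procA_main Ls hk hLs n 1 n 1 a (by omega) le_rfl le_rfl ha1 han
  have hck : (minSet Ls 1 n).card ≤ k := minSet_card_le Ls hk hLs le_rfl le_rfl
  have hvpos : 1 ≤ minLevel Ls 1 n := minLevel_pos Ls hk hLs le_rfl le_rfl h1n
  have h1 : Nat.clog 2 ((minSet Ls 1 n).card + 1) ≤ Nat.clog 2 (k + 1) :=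
    Nat.clog_mono_right 2 (by omega)
  have h2 : Nat.clog 2 (k + 1) ≤ Nat.clog 2 (k + 1) * minLevel Ls 1 n :=
    Nat.le_mul_of_pos_right _ hvpos
  omega
end

section
/- Let L^1, ..., L^k be valid prefix-free code length vectors on n keys, with L^s minimizing F^s · L' over all valid L' for each scenario s. Define L by L_i = ⌈log₂ k⌉ + min_s L^s_i. Then L is valid and for every scenario s, F^s · L ≤ (min over valid L* of F^s · L*) + ⌈log₂ k⌉, assuming each F^s is a probability vector (nonnegative entries summing to 1). -/
/-- `L` is a valid prefix-free code length vector iff it satisfies Kraft's inequality. -/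
def IsValidLengthVector {n : ℕ} (L : Fin n → ℕ) : Prop :=
  ∑ i, ((1 : ℚ) / 2) ^ L i ≤ 1

/-- Theorem 7 (analysis of R-ht): given probability vectors `F^1,…,F^k` and valid length
vectors `L^1,…,L^k`, with `L^s` of minimum cost for scenario `s`, the vector `L` with
`L_i = ⌈log₂ k⌉ + min_s L^s_i` is valid and has regret at most `⌈log₂ k⌉` in every
scenario. -/
theorem rht_regret {n k : ℕ} (hk : 0 < k)
    (F : Fin k → Fin n → ℝ)
    (hFnonneg : ∀ s i, 0 ≤ F s i) (hFsum : ∀ s, ∑ i, F s i = 1)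
    (Ls : Fin k → Fin n → ℕ)
    (hLs : ∀ s, IsValidLengthVector (Ls s))
    (hopt : ∀ s, ∀ L' : Fin n → ℕ, IsValidLengthVector L' →
      ∑ i, F s i * Ls s i ≤ ∑ i, F s i * L' i) :
    IsValidLengthVector (fun i => Nat.clog 2 k + ⨅ s : Fin k, Ls s i) ∧
    ∀ s, ∀ Lstar : Fin n → ℕ, IsValidLengthVector Lstar →
      ∑ i, F s i * (Nat.clog 2 k + ⨅ s' : Fin k, Ls s' i : ℕ) ≤
        (∑ i, F s i * Lstar i) + Nat.clog 2 k := by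
  haveI : Nonempty (Fin k) := ⟨⟨0, hk⟩⟩
  set c := Nat.clog 2 k with hc
  have hmin : ∀ i s, (⨅ s' : Fin k, Ls s' i) ≤ Ls s i := fun i s =>
    ciInf_le (OrderBot.bddBelow _) s
  have hattain : ∀ i, ∃ s, (⨅ s' : Fin k, Ls s' i) = Ls s i := by
    intro i
    obtain ⟨s0, hs0⟩ := Finite.exists_min (fun s => Ls s i)
    exact ⟨s0, le_antisymm (hmin i s0) (le_ciInf hs0)⟩
  constructor
  · unfold IsValidLengthVector
    have h1 : ∀ i, ((1:ℚ)/2) ^ (c + ⨅ s' : Fin k, Ls s' i) ≤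
        ((1:ℚ)/2)^c * ∑ s, ((1:ℚ)/2) ^ (Ls s i) := by
      intro i
      obtain ⟨s, hs⟩ := hattain i
      rw [hs, pow_add]
      apply mul_le_mul_of_nonneg_left _ (by positivity)
      exact Finset.single_le_sum (f := fun t => ((1:ℚ)/2) ^ Ls t i) (fun t _ => by positivity) (Finset.mem_univ s)
    calc ∑ i, ((1:ℚ)/2) ^ (c + ⨅ s' : Fin k, Ls s' i)
        ≤ ∑ i, ((1:ℚ)/2)^c * ∑ s, ((1:ℚ)/2) ^ (Ls s i) :=
          Finset.sum_le_sum fun i _ => h1 i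
      _ = ((1:ℚ)/2)^c * ∑ s, ∑ i, ((1:ℚ)/2) ^ (Ls s i) := by
          rw [← Finset.mul_sum, Finset.sum_comm]
      _ ≤ ((1:ℚ)/2)^c * ∑ s : Fin k, (1:ℚ) := by
          apply mul_le_mul_of_nonneg_left _ (by positivity)
          exact Finset.sum_le_sum fun s _ => hLs s
      _ ≤ 1 := by
          simp only [Finset.sum_const, Finset.card_univ, Fintype.card_fin, nsmul_eq_mul,
            mul_one]
          have hk2 : (k:ℚ) ≤ 2^c := by
            exact_mod_cast Nat.le_pow_clog (by norm_num) k
          rw [one_div, inv_pow]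
          rw [inv_mul_le_iff₀ (by positivity)]
          linarith
  · intro s Lstar hLstar
    have key : ∑ i, F s i * ((c + ⨅ s' : Fin k, Ls s' i : ℕ) : ℝ) ≤
        ∑ i, F s i * ((c + Ls s i : ℕ) : ℝ) := by
      apply Finset.sum_le_sum
      intro i _
      apply mul_le_mul_of_nonneg_left _ (hFnonneg s i)
      exact_mod_cast Nat.add_le_add_left (hmin i s) c
    have expand : ∑ i, F s i * ((c + Ls s i : ℕ) : ℝ) =
        (c : ℝ) + ∑ i, F s i * Ls s i := by
      push_cast
      simp only [mul_add]
      rw [Finset.sum_add_distrib, ← Finset.sum_mul, hFsum s, one_mul]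
    have := hopt s Lstar hLstar
    push_cast at key expand ⊢
    linarith
end

section
/- Consider k ≥ 2 scenarios on n = k + 1 keys where F^s is the indicator vector of key s for s in {1,...,k} and key k+1 has frequency 0 in all scenarios. For every valid prefix-free code length vector L on n keys, there exists a scenario s ∈ {1,...,k} with F^s · L ≥ 1 + ⌊log₂ k⌋. Hence no Huffman tree has regret smaller than ⌊log₂ k⌋ on this instance (the optimum cost per scenario being 1). -/
/-- Lower bound construction for robust Huffman trees: with `k ≥ 2` scenarios on
`n = k + 1` keys, where scenario `s` is the indicator of key `s` (and key `k+1` has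
frequency `0` everywhere), every valid length vector has cost at least
`1 + ⌊log₂ k⌋` in some scenario; hence no tree has regret below `⌊log₂ k⌋`
(the optimum cost per scenario being `1`). -/
theorem ht_regret_lower_bound (k : ℕ) (hk : 2 ≤ k)
    (L : Fin (k + 1) → ℕ) (hL : IsValidLengthVector L) :
    ∃ s : Fin (k + 1), (s : ℕ) < k ∧
      1 + Nat.log 2 k ≤ ∑ i, (if i = s then 1 else 0) * L i := by
  by_contra hcon
  push_neg at hcon
  have hbound : ∀ i : Fin k, L i.castSucc ≤ Nat.log 2 k := by
    intro i
    have hi : ((i.castSucc : Fin (k+1)) : ℕ) < k := by simp [i.isLt]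
    have h := hcon i.castSucc hi
    have hsum : ∑ j, (if j = i.castSucc then 1 else 0) * L j = L i.castSucc := by
      rw [Finset.sum_eq_single i.castSucc]
      · simp
      · intro b _ hb; simp [hb]
      · intro hb; simp at hb
    rw [hsum] at h
    omega
  have hpow : (2:ℚ)^(Nat.log 2 k) ≤ (k:ℚ) := by
    exact_mod_cast Nat.pow_log_le_self 2 (by omega)
  have hterm : ∀ i : Fin k, ((1:ℚ)/2)^(Nat.log 2 k) ≤ ((1:ℚ)/2) ^ L i.castSucc := by
    intro i
    apply pow_le_pow_of_le_one (by norm_num) (by norm_num) (hbound i)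
  have h1 : (1:ℚ) ≤ ∑ i : Fin k, ((1:ℚ)/2) ^ L i.castSucc := by
    calc (1:ℚ) ≤ (k:ℚ) * ((1:ℚ)/2)^(Nat.log 2 k) := by
          rw [div_pow, one_pow, mul_one_div, le_div_iff₀ (by positivity)]
          linarith
      _ = ∑ _i : Fin k, ((1:ℚ)/2)^(Nat.log 2 k) := by
          rw [Finset.sum_const, Finset.card_univ, Fintype.card_fin, nsmul_eq_mul]
      _ ≤ ∑ i : Fin k, ((1:ℚ)/2) ^ L i.castSucc := Finset.sum_le_sum fun i _ => hterm i
  have hlast : (0:ℚ) < ((1:ℚ)/2) ^ L (Fin.last k) := by positivity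
  have := hL
  unfold IsValidLengthVector at this
  rw [Fin.sum_univ_castSucc] at this
  linarith
end

section
/- OPT satisfies the recurrence OPT(m) = m + min over r ∈ {1,...,m} of (OPT(r−1) + OPT(m−r)) for all m ≥ 1, with OPT(0) = 0, where OPT(m) = (m+1)·⌈log₂(m+1)⌉ − 2^{⌈log₂(m+1)⌉} + 1, and the minimum is attained at r = ⌈m/2⌉ (and r = ⌊m/2⌋ + 1). -/
def OPT (m : ℕ) : ℕ :=
  (m + 1) * Nat.clog 2 (m + 1) + 1 - 2 ^ Nat.clog 2 (m + 1)

lemma clog_step {n : ℕ} (hn : 2 ≤ n) : Nat.clog 2 n = Nat.clog 2 ((n + 1) / 2) + 1 := by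
  have := Nat.clog_of_two_le (b := 2) (n := n) (by norm_num) hn
  simpa using this

lemma pow_clog_le (n : ℕ) : 2 ^ Nat.clog 2 (n + 1) ≤ (n + 1) * Nat.clog 2 (n + 1) + 1 := by
  rcases Nat.eq_zero_or_pos n with rfl | hn
  · simp [Nat.clog_one_right]
  · set c := Nat.clog 2 (n + 1) with hc
    have h1 : 2 ^ (c - 1) < n + 1 := Nat.pow_pred_clog_lt_self (by norm_num) (by omega)
    have hc1 : 1 ≤ c := by
      have : (0:ℕ) < Nat.clog 2 (n + 1) :=
        (Nat.lt_clog_iff_pow_lt (by norm_num)).mpr (by simpa using hn)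
      omega
    have h2 : 2 ^ c = 2 * 2 ^ (c - 1) := by
      rw [← pow_succ']
      congr 1
      omega
    rcases Nat.lt_or_ge c 2 with h | h
    · have : c = 1 := by omega
      rw [this]
      have e : (n + 1) * 1 = n + 1 := by ring
      omega
    · have : 2 * n ≤ (n + 1) * c := by nlinarith
      omega

lemma OPT_succ (m : ℕ) : OPT (m + 1) = OPT m + Nat.clog 2 (m + 2) := by
  unfold OPT
  set c := Nat.clog 2 (m + 1) with hc
  set c' := Nat.clog 2 (m + 2) with hc'
  have hcc' : c ≤ c' := Nat.clog_mono_right 2 (by omega)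
  have h1 : 2 ^ c ≤ (m + 1) * c + 1 := pow_clog_le m
  by_cases h : m + 2 ≤ 2 ^ c
  · have hle : c' ≤ c := (Nat.clog_le_iff_le_pow (by norm_num)).mpr h
    have he : c' = c := le_antisymm hle hcc'
    rw [he]
    have e1 : (m + 1 + 1) * c = (m + 1) * c + c := by ring
    omega
  · push_neg at h
    have hm1 : m + 1 ≤ 2 ^ c := Nat.le_pow_clog (by norm_num) _
    have hp : m + 1 = 2 ^ c := by omega
    have hlt : c < c' := (Nat.lt_clog_iff_pow_lt (by norm_num)).mpr h
    have hle : c' ≤ c + 1 := by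
      rw [Nat.clog_le_iff_le_pow (by norm_num)]
      have : (1:ℕ) ≤ 2 ^ c := Nat.one_le_two_pow
      rw [pow_succ]
      omega
    have he : c' = c + 1 := by omega
    rw [he]
    have e1 : (m + 1 + 1) * (c + 1) = (m + 1) * c + c + m + 2 := by ring
    have e2 : 2 ^ (c + 1) = 2 * 2 ^ c := by rw [pow_succ]; ring
    omega

lemma OPT_step {a b : ℕ} (h : a + 2 ≤ b) : OPT (a + 1) + OPT (b - 1) ≤ OPT a + OPT b := by
  obtain ⟨k, rfl⟩ : ∃ k, b = k + 1 := ⟨b - 1, by omega⟩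
  have h1 := OPT_succ a
  have h2 := OPT_succ k
  have h3 : Nat.clog 2 (a + 2) ≤ Nat.clog 2 (k + 2) := Nat.clog_mono_right 2 (by omega)
  simp only [Nat.add_sub_cancel]
  omega

lemma conv_aux : ∀ k a b : ℕ, b - a ≤ k → a ≤ b →
    OPT ((a + b) / 2) + OPT (a + b - (a + b) / 2) ≤ OPT a + OPT b := by
  intro k
  induction k with
  | zero =>
    intro a b h1 h2
    have e1 : (a + b) / 2 = a := by omega
    have e2 : a + b - (a + b) / 2 = b := by omega
    rw [e2, e1]
  | succ k ih =>
    intro a b h1 h2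
    rcases Nat.lt_or_ge b (a + 2) with h | h
    · have e1 : (a + b) / 2 = a := by omega
      have e2 : a + b - (a + b) / 2 = b := by omega
      rw [e2, e1]
    · have step := OPT_step h
      have e3 : a + 1 + (b - 1) = a + b := by omega
      have := ih (a + 1) (b - 1) (by omega) (by omega)
      rw [e3] at this
      omega

lemma conv (a b : ℕ) : OPT ((a + b) / 2) + OPT (a + b - (a + b) / 2) ≤ OPT a + OPT b := by
  rcases le_total a b with h | h
  · exact conv_aux (b - a) a b le_rfl h
  · have := conv_aux (a - b) b a le_rfl h
    have e : b + a = a + b := by ring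
    rw [e] at this
    omega

lemma OPT_zero : OPT 0 = 0 := by simp [OPT, Nat.clog_one_right]

lemma OPT_one : OPT 1 = 1 := by
  have : Nat.clog 2 2 = 1 := by
    rw [clog_step (by norm_num)]
    norm_num [Nat.clog_one_right]
  simp [OPT, this]

lemma OPT_two : OPT 2 = 3 := by
  have h2 : Nat.clog 2 2 = 1 := by
    rw [clog_step (by norm_num)]
    norm_num [Nat.clog_one_right]
  have : Nat.clog 2 3 = 2 := by
    rw [clog_step (by norm_num)]
    norm_num [h2]
  simp [OPT, this]

lemma OPT_rec : ∀ m : ℕ, 1 ≤ m → OPT m = m + (OPT ((m - 1) / 2) + OPT (m / 2)) := by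
  intro m
  induction m using Nat.strong_induction_on with
  | _ m ih =>
    intro hm
    rcases Nat.lt_or_ge m 3 with h3 | h3
    · interval_cases m
      · simp [OPT_one, OPT_zero]
      · simp [OPT_two, OPT_one, OPT_zero]
    · obtain ⟨k, rfl⟩ : ∃ k, m = k + 2 := ⟨m - 2, by omega⟩
      have IH := ih k (by omega) (by omega)
      have o1 := OPT_succ ((k - 1) / 2)
      have o2 := OPT_succ (k / 2)
      have s1 := OPT_succ k
      have s2 := OPT_succ (k + 1)
      rw [show k + 1 + 1 = k + 2 from by omega, show k + 1 + 2 = k + 3 from by omega] at s2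
      have c1 : Nat.clog 2 (k + 2) = Nat.clog 2 ((k - 1) / 2 + 2) + 1 := by
        rw [clog_step (by omega)]
        congr 2
        omega
      have c2 : Nat.clog 2 (k + 3) = Nat.clog 2 (k / 2 + 2) + 1 := by
        rw [clog_step (by omega)]
        congr 2
        omega
      have e0 : (k + 2 - 1) / 2 = (k - 1) / 2 + 1 := by omega
      have e2 : (k + 2) / 2 = k / 2 + 1 := by omega
      rw [e0, e2, o1, o2]
      have e3 : (k - 1) / 2 + 1 + 1 = (k - 1) / 2 + 2 := by omega
      have e4 : k / 2 + 1 + 1 = k / 2 + 2 := by omega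
      rw [e3, e4]
      omega

/-- `OPT` satisfies `OPT 0 = 0` and, for `m ≥ 1`, the recurrence
`OPT m = m + min_{1 ≤ r ≤ m} (OPT (r-1) + OPT (m-r))`, the minimum being attained at
`r = ⌈m/2⌉` and at `r = ⌊m/2⌋ + 1`. -/
theorem OPT_recurrence (m : ℕ) (hm : 1 ≤ m) :
    OPT 0 = 0 ∧
    OPT m = m + (Finset.Icc 1 m).inf'
      ⟨1, Finset.mem_Icc.mpr ⟨le_refl 1, hm⟩⟩ (fun r => OPT (r - 1) + OPT (m - r)) ∧
    (Finset.Icc 1 m).inf' ⟨1, Finset.mem_Icc.mpr ⟨le_refl 1, hm⟩⟩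
        (fun r => OPT (r - 1) + OPT (m - r)) =
      OPT ((m + 1) / 2 - 1) + OPT (m - (m + 1) / 2) ∧
    (Finset.Icc 1 m).inf' ⟨1, Finset.mem_Icc.mpr ⟨le_refl 1, hm⟩⟩
        (fun r => OPT (r - 1) + OPT (m - r)) =
      OPT (m / 2 + 1 - 1) + OPT (m - (m / 2 + 1)) := by
  have hne : (Finset.Icc 1 m).Nonempty := ⟨1, Finset.mem_Icc.mpr ⟨le_refl 1, hm⟩⟩
  set f : ℕ → ℕ := fun r => OPT (r - 1) + OPT (m - r) with hf
  have hinf : (Finset.Icc 1 m).inf' hne f = OPT ((m - 1) / 2) + OPT (m / 2) := by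
    apply le_antisymm
    · have hmem : (m + 1) / 2 ∈ Finset.Icc 1 m := Finset.mem_Icc.mpr ⟨by omega, by omega⟩
      have := Finset.inf'_le f hmem
      have e1 : (m + 1) / 2 - 1 = (m - 1) / 2 := by omega
      have e2 : m - (m + 1) / 2 = m / 2 := by omega
      simp only [hf, e1, e2] at this ⊢
      exact this
    · apply Finset.le_inf'
      intro r hr
      rw [Finset.mem_Icc] at hr
      have := conv (r - 1) (m - r)
      have e1 : r - 1 + (m - r) = m - 1 := by omega
      have e2 : (m - 1) - (m - 1) / 2 = m / 2 := by omega
      rw [e1, e2] at this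
      simpa [hf] using this
  refine ⟨OPT_zero, ?_, ?_, ?_⟩
  · rw [hinf]
    exact OPT_rec m hm
  · rw [hinf]
    have e1 : (m + 1) / 2 - 1 = (m - 1) / 2 := by omega
    have e2 : m - (m + 1) / 2 = m / 2 := by omega
    rw [e2, e1]
  · rw [hinf]
    have e1 : m / 2 + 1 - 1 = m / 2 := by omega
    have e2 : m - (m / 2 + 1) = (m - 1) / 2 := by omega
    rw [e1, e2, Nat.add_comm]
end
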